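/- arXiv:2503.22826 — 4 statements merged into one kernel-verified Lean document; each statement's English description precedes it below -/
import Mathlib

section
/- Weak duality holds between the primal and dual subproblems: for every (d, z) ∈ ℝ^n × ℝ with ‖d‖_∞ ≤ δ and b_j + g_jᵀd ≤ z for all j ∈ {1,…,m}, and every (ω, γ) ∈ ℝ^m × ℝ^n with 𝟙ᵀω = 1 and ω ≥ 0, one has −(1/2)(Gω + γ)ᵀW(Gω + γ) + bᵀω − δ‖γ‖₁ ≤ z + (1/2)dᵀHd. -/
/-!
Weak duality is Fenchel–Young for the quadratic term: with `v = Gω + γ`, expanding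
`0 ≤ (d + Wv)ᵀH(d + Wv)` gives `-(1/2)vᵀWv ≤ (1/2)dᵀHd + dᵀv`. The term `dᵀGω` is a convex
combination of the `g_jᵀd`, so `bᵀω + dᵀGω ≤ z`, and `dᵀγ ≤ δ‖γ‖₁` since `‖d‖_∞ ≤ δ`.
-/

open Matrix

variable {ι : Type*} [Fintype ι]

theorem Matrix.PosDef.neg_half_dotProduct_inv_mulVec_le [DecidableEq ι]
    {H : Matrix ι ι ℝ} (hH : H.PosDef) (d v : ι → ℝ) :
    -(1 / 2) * (v ⬝ᵥ H⁻¹ *ᵥ v) ≤ (1 / 2) * (d ⬝ᵥ H *ᵥ d) + d ⬝ᵥ v := by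
  set u := H⁻¹ *ᵥ v
  have hHu : H *ᵥ u = v := by
    rw [mulVec_mulVec, mul_nonsing_inv H (isUnit_iff_ne_zero.2 hH.det_pos.ne'), one_mulVec]
  have hHt : Hᵀ = H := by
    simpa [conjTranspose_eq_transpose_of_trivial] using hH.isHermitian.eq
  have hcross : u ⬝ᵥ H *ᵥ d = d ⬝ᵥ v := by
    rw [dotProduct_mulVec, ← mulVec_transpose, hHt, hHu, dotProduct_comm]
  have hnonneg : 0 ≤ (d + u) ⬝ᵥ H *ᵥ (d + u) := by
    simpa using hH.posSemidef.dotProduct_mulVec_nonneg (d + u)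
  have hexpand : (d + u) ⬝ᵥ H *ᵥ (d + u) = d ⬝ᵥ H *ᵥ d + 2 * (d ⬝ᵥ v) + v ⬝ᵥ H⁻¹ *ᵥ v := by
    rw [mulVec_add, dotProduct_add, add_dotProduct, add_dotProduct, hHu, hcross,
      dotProduct_comm u v]
    ring
  linarith

theorem dotProduct_le_of_forall_le_of_sum_eq_one {f ω : ι → ℝ} {z : ℝ} (hf : ∀ j, f j ≤ z)
    (hω0 : ∀ j, 0 ≤ ω j) (hω1 : ∑ j, ω j = 1) : f ⬝ᵥ ω ≤ z :=
  calc f ⬝ᵥ ω = ∑ j, ω j * f j := by simp only [dotProduct, mul_comm]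
    _ ≤ ∑ j, ω j * z := Finset.sum_le_sum fun j _ => mul_le_mul_of_nonneg_left (hf j) (hω0 j)
    _ = z := by rw [← Finset.sum_mul, hω1, one_mul]

theorem dotProduct_le_mul_sum_abs {d γ : ι → ℝ} {δ : ℝ} (hd : ∀ i, |d i| ≤ δ) :
    d ⬝ᵥ γ ≤ δ * ∑ i, |γ i| := by
  rw [Finset.mul_sum]
  refine Finset.sum_le_sum fun i _ => ?_
  calc d i * γ i ≤ |d i| * |γ i| := (le_abs_self _).trans (abs_mul _ _).le
    _ ≤ δ * |γ i| := mul_le_mul_of_nonneg_right (hd i) (abs_nonneg _)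

theorem stmt3_general (n m : ℕ)
    (G : Matrix (Fin n) (Fin m) ℝ) (b : Fin m → ℝ)
    (H W : Matrix (Fin n) (Fin n) ℝ) (hH : H.PosDef) (hW : W = H⁻¹)
    (δ : ℝ)
    (d : Fin n → ℝ) (z : ℝ)
    (hd : ∀ i, |d i| ≤ δ) (hdz : ∀ j, b j + (fun i => G i j) ⬝ᵥ d ≤ z)
    (ω : Fin m → ℝ) (γ : Fin n → ℝ)
    (hω1 : ∑ j, ω j = 1) (hω0 : ∀ j, 0 ≤ ω j) :
    -(1 / 2) * ((G *ᵥ ω + γ) ⬝ᵥ W *ᵥ (G *ᵥ ω + γ)) + b ⬝ᵥ ω - δ * ∑ i, |γ i|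
      ≤ z + (1 / 2) * (d ⬝ᵥ H *ᵥ d) := by
  subst hW
  have hquad := hH.neg_half_dotProduct_inv_mulVec_le d (G *ᵥ ω + γ)
  have hprimal : b ⬝ᵥ ω + d ⬝ᵥ G *ᵥ ω ≤ z := by
    rw [dotProduct_mulVec, ← add_dotProduct]
    refine dotProduct_le_of_forall_le_of_sum_eq_one (fun j => ?_) hω0 hω1
    simpa [vecMul, dotProduct_comm] using hdz j
  have hbox := dotProduct_le_mul_sum_abs (γ := γ) hd
  rw [dotProduct_add] at hquad
  linarith

/-- weak duality between the primal subproblem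
`min z + (1/2)dᵀHd  s.t. ‖d‖_∞ ≤ δ, b_j + g_jᵀd ≤ z` and the dual subproblem
`max −(1/2)(Gω + γ)ᵀW(Gω + γ) + bᵀω − δ‖γ‖₁  s.t. 𝟙ᵀω = 1, ω ≥ 0`. -/
theorem stmt3 (n m : ℕ) [NeZero n] [NeZero m]
    (G : Matrix (Fin n) (Fin m) ℝ) (b : Fin m → ℝ)
    (H W : Matrix (Fin n) (Fin n) ℝ) (hH : H.PosDef) (hW : W = H⁻¹)
    (δ : ℝ) (hδ : 0 < δ)
    (d : Fin n → ℝ) (z : ℝ)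
    (hd : ∀ i, |d i| ≤ δ) (hdz : ∀ j, b j + (fun i => G i j) ⬝ᵥ d ≤ z)
    (ω : Fin m → ℝ) (γ : Fin n → ℝ)
    (hω1 : ∑ j, ω j = 1) (hω0 : ∀ j, 0 ≤ ω j) :
    -(1 / 2) * ((G *ᵥ ω + γ) ⬝ᵥ W *ᵥ (G *ᵥ ω + γ)) + b ⬝ᵥ ω - δ * ∑ i, |γ i|
      ≤ z + (1 / 2) * (d ⬝ᵥ H *ᵥ d) :=
  stmt3_general n m G b H W hH hW δ d z hd hdz ω γ hω1 hω0
end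

section
/- Although the dual subproblem need not have a unique optimal solution, every optimal solution yields the same search direction: if (ω¹, γ¹) and (ω², γ²) are both optimal solutions of the dual subproblem, then Gω¹ + γ¹ = Gω² + γ², and hence −W(Gω¹ + γ¹) = −W(Gω² + γ²). -/
/-!
The objective depends on `(ω, γ)` through `z = Gω + γ` via the term `-(1/2) zᵀWz`, which is
strictly concave in `z` because `W = H⁻¹` is positive definite; the remaining terms are concave.
The feasible set is convex, so the midpoint of two optimal solutions is feasible, and its value
exceeds the common optimal value by `(z₁ - z₂)ᵀW(z₁ - z₂) / 8`. Optimality forces this to vanish,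
hence `z₁ = z₂`.
-/

open Matrix

/-- Objective of the dual subproblem. -/
noncomputable def dualObj (n m : ℕ) (G : Matrix (Fin n) (Fin m) ℝ) (b : Fin m → ℝ)
    (W : Matrix (Fin n) (Fin n) ℝ) (δ : ℝ) (ω : Fin m → ℝ) (γ : Fin n → ℝ) : ℝ :=
  -(1 / 2) * ((G *ᵥ ω + γ) ⬝ᵥ W *ᵥ (G *ᵥ ω + γ)) + b ⬝ᵥ ω - δ * ∑ i, |γ i|

/-- Feasibility for the dual subproblem: `𝟙ᵀω = 1` and `ω ≥ 0`. -/
def dualFeas (m : ℕ) (ω : Fin m → ℝ) : Prop :=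
  ∑ j, ω j = 1 ∧ ∀ j, 0 ≤ ω j

section Midpoint

variable {ι κ : Type*}

theorem dotProduct_mulVec_midpoint [Fintype ι] {K : Type*} [Field K] [CharZero K]
    (W : Matrix ι ι K) (x y : ι → K) :
    midpoint K x y ⬝ᵥ W *ᵥ midpoint K x y
      = (x ⬝ᵥ W *ᵥ x + y ⬝ᵥ W *ᵥ y) / 2 - (x - y) ⬝ᵥ W *ᵥ (x - y) / 4 := by
  simp only [midpoint_eq_smul_add, mulVec_smul, mulVec_add, mulVec_sub, dotProduct_smul,
    smul_dotProduct, dotProduct_add, add_dotProduct, dotProduct_sub, sub_dotProduct, smul_eq_mul,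
    invOf_eq_inv]
  ring

theorem mulVec_midpoint_add_midpoint [Fintype κ] (G : Matrix ι κ ℝ) (ω₁ ω₂ : κ → ℝ)
    (γ₁ γ₂ : ι → ℝ) :
    G *ᵥ midpoint ℝ ω₁ ω₂ + midpoint ℝ γ₁ γ₂ = midpoint ℝ (G *ᵥ ω₁ + γ₁) (G *ᵥ ω₂ + γ₂) := by
  simp only [midpoint_eq_smul_add, mulVec_smul, mulVec_add, smul_add]
  abel

theorem sum_abs_midpoint_le [Fintype ι] (x y : ι → ℝ) :
    ∑ i, |midpoint ℝ x y i| ≤ (∑ i, |x i| + ∑ i, |y i|) / 2 := by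
  rw [← Finset.sum_add_distrib, Finset.sum_div]
  refine Finset.sum_le_sum fun i _ => ?_
  simp only [midpoint_eq_smul_add, invOf_eq_inv, Pi.smul_apply, Pi.add_apply, smul_eq_mul,
    abs_mul, abs_inv, abs_two]
  linarith [abs_add_le (x i) (y i)]

end Midpoint

theorem convex_setOf_dualFeas (m : ℕ) : Convex ℝ {ω | dualFeas m ω} := by
  convert convex_stdSimplex ℝ (Fin m) using 1
  ext ω
  exact and_comm

theorem dualObj_midpoint_ge {n m : ℕ} (G : Matrix (Fin n) (Fin m) ℝ) (b : Fin m → ℝ)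
    (W : Matrix (Fin n) (Fin n) ℝ) {δ : ℝ} (hδ : 0 ≤ δ) (ω₁ ω₂ : Fin m → ℝ) (γ₁ γ₂ : Fin n → ℝ) :
    (dualObj n m G b W δ ω₁ γ₁ + dualObj n m G b W δ ω₂ γ₂) / 2
        + (G *ᵥ ω₁ + γ₁ - (G *ᵥ ω₂ + γ₂)) ⬝ᵥ W *ᵥ (G *ᵥ ω₁ + γ₁ - (G *ᵥ ω₂ + γ₂)) / 8
      ≤ dualObj n m G b W δ (midpoint ℝ ω₁ ω₂) (midpoint ℝ γ₁ γ₂) := by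
  have hb : b ⬝ᵥ midpoint ℝ ω₁ ω₂ = (b ⬝ᵥ ω₁ + b ⬝ᵥ ω₂) / 2 := by
    simp only [midpoint_eq_smul_add, invOf_eq_inv, dotProduct_smul, dotProduct_add, smul_eq_mul]
    ring
  have habs := mul_le_mul_of_nonneg_left (sum_abs_midpoint_le γ₁ γ₂) hδ
  simp only [dualObj, mulVec_midpoint_add_midpoint, dotProduct_mulVec_midpoint, hb]
  linarith

theorem stmt5_general (n m : ℕ)
    (G : Matrix (Fin n) (Fin m) ℝ) (b : Fin m → ℝ)
    (H W : Matrix (Fin n) (Fin n) ℝ) (hH : H.PosDef) (hW : W = H⁻¹)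
    (δ : ℝ) (hδ : 0 < δ)
    (ω₁ ω₂ : Fin m → ℝ) (γ₁ γ₂ : Fin n → ℝ)
    (hfeas₁ : dualFeas m ω₁) (hfeas₂ : dualFeas m ω₂)
    (hopt₁ : ∀ (ω : Fin m → ℝ) (γ : Fin n → ℝ), dualFeas m ω →
      dualObj n m G b W δ ω γ ≤ dualObj n m G b W δ ω₁ γ₁)
    (hopt₂ : ∀ (ω : Fin m → ℝ) (γ : Fin n → ℝ), dualFeas m ω →
      dualObj n m G b W δ ω γ ≤ dualObj n m G b W δ ω₂ γ₂) :
    G *ᵥ ω₁ + γ₁ = G *ᵥ ω₂ + γ₂ ∧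
      -(W *ᵥ (G *ᵥ ω₁ + γ₁)) = -(W *ᵥ (G *ᵥ ω₂ + γ₂)) := by
  suffices h : G *ᵥ ω₁ + γ₁ = G *ᵥ ω₂ + γ₂ from ⟨h, by rw [h]⟩
  have hvalue : dualObj n m G b W δ ω₁ γ₁ = dualObj n m G b W δ ω₂ γ₂ :=
    le_antisymm (hopt₂ ω₁ γ₁ hfeas₁) (hopt₁ ω₂ γ₂ hfeas₂)
  have hmid := hopt₁ _ (midpoint ℝ γ₁ γ₂) ((convex_setOf_dualFeas m).midpoint_mem hfeas₁ hfeas₂)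
  have hgap := dualObj_midpoint_ge G b W hδ.le ω₁ ω₂ γ₁ γ₂
  rw [← sub_eq_zero]
  by_contra hne
  have hWpos : W.PosDef := hW ▸ hH.inv
  have hpos := hWpos.dotProduct_mulVec_pos hne
  rw [star_trivial] at hpos
  linarith

/-- every optimal solution of the dual subproblem yields the same search
direction: if `(ω¹, γ¹)` and `(ω², γ²)` are both dual optimal, then `Gω¹ + γ¹ = Gω² + γ²`
and hence `−W(Gω¹ + γ¹) = −W(Gω² + γ²)`. -/
theorem stmt5 (n m : ℕ) [NeZero n] [NeZero m]
    (G : Matrix (Fin n) (Fin m) ℝ) (b : Fin m → ℝ)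
    (H W : Matrix (Fin n) (Fin n) ℝ) (hH : H.PosDef) (hW : W = H⁻¹)
    (δ : ℝ) (hδ : 0 < δ)
    (ω₁ ω₂ : Fin m → ℝ) (γ₁ γ₂ : Fin n → ℝ)
    (hfeas₁ : dualFeas m ω₁) (hfeas₂ : dualFeas m ω₂)
    (hopt₁ : ∀ (ω : Fin m → ℝ) (γ : Fin n → ℝ), dualFeas m ω →
      dualObj n m G b W δ ω γ ≤ dualObj n m G b W δ ω₁ γ₁)
    (hopt₂ : ∀ (ω : Fin m → ℝ) (γ : Fin n → ℝ), dualFeas m ω →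
      dualObj n m G b W δ ω γ ≤ dualObj n m G b W δ ω₂ γ₂) :
    G *ᵥ ω₁ + γ₁ = G *ᵥ ω₂ + γ₂ ∧
      -(W *ᵥ (G *ᵥ ω₁ + γ₁)) = -(W *ᵥ (G *ᵥ ω₂ + γ₂)) :=
  stmt5_general n m G b H W hH hW δ hδ ω₁ ω₂ γ₁ γ₂ hfeas₁ hfeas₂ hopt₁ hopt₂
end

section
/- The damped BFGS update preserves symmetric positive definiteness: if H ∈ ℝ^{n×n} is symmetric positive definite and s, v ∈ ℝ^n satisfy s ≠ 0 and sᵀv > 0, then the matrix H⁺ = (I − s sᵀH/(sᵀHs))ᵀ H (I − s sᵀH/(sᵀHs)) + v vᵀ/(sᵀv) is symmetric positive definite. -/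
/-!
With `P = I − s sᵀH / (sᵀHs)`, the quadratic form of `Pᵀ H P` is `(Px)ᵀ H (Px) ≥ 0`, positive
unless `Px = 0`, i.e. unless `x` is a multiple `a • s`. On that line the rank-one term gives
`(vᵀx)² / (sᵀv) = a² (sᵀv) > 0`.
-/

open Matrix

variable {ι : Type*} [Fintype ι]

theorem Matrix.PosSemidef.add_posDef_of_forall_pos_or_pos {A B : Matrix ι ι ℝ}
    (hA : A.PosSemidef) (hB : B.PosSemidef)
    (h : ∀ x ≠ 0, 0 < x ⬝ᵥ A *ᵥ x ∨ 0 < x ⬝ᵥ B *ᵥ x) : (A + B).PosDef := by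
  refine posDef_iff_dotProduct_mulVec.2 ⟨hA.isHermitian.add hB.isHermitian, fun x hx => ?_⟩
  have hAx : 0 ≤ x ⬝ᵥ A *ᵥ x := by simpa using hA.dotProduct_mulVec_nonneg x
  have hBx : 0 ≤ x ⬝ᵥ B *ᵥ x := by simpa using hB.dotProduct_mulVec_nonneg x
  rw [star_trivial, add_mulVec, dotProduct_add]
  rcases h x hx with h | h <;> linarith

theorem dotProduct_transpose_mul_mul_mulVec (A H : Matrix ι ι ℝ) (x : ι → ℝ) :
    x ⬝ᵥ (Aᵀ * H * A) *ᵥ x = (A *ᵥ x) ⬝ᵥ H *ᵥ (A *ᵥ x) := by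
  rw [← mulVec_mulVec, ← mulVec_mulVec, dotProduct_mulVec, vecMul_transpose]

theorem dotProduct_smul_vecMulVec_self_mulVec (c : ℝ) (v x : ι → ℝ) :
    x ⬝ᵥ (c • vecMulVec v v) *ᵥ x = c * (v ⬝ᵥ x) ^ 2 := by
  rw [smul_mulVec, vecMulVec_mulVec, op_smul_eq_smul, dotProduct_smul, dotProduct_smul,
    dotProduct_comm x v, smul_eq_mul, smul_eq_mul]
  ring

theorem posSemidef_smul_vecMulVec_self {c : ℝ} (hc : 0 ≤ c) (v : ι → ℝ) :
    (c • vecMulVec v v).PosSemidef :=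
  (posSemidef_vecMulVec_self_star v).smul hc

theorem one_sub_smul_vecMulVec_mul_mulVec [DecidableEq ι] (c : ℝ) (H : Matrix ι ι ℝ)
    (s x : ι → ℝ) :
    (1 - c • (vecMulVec s s * H)) *ᵥ x = x - (c * (s ⬝ᵥ H *ᵥ x)) • s := by
  rw [sub_mulVec, one_mulVec, smul_mulVec, ← mulVec_mulVec, vecMulVec_mulVec,
    op_smul_eq_smul, smul_smul]

theorem stmt12_general (n : ℕ)
    (H : Matrix (Fin n) (Fin n) ℝ) (hH : H.PosDef)
    (s v : Fin n → ℝ) (hsv : 0 < s ⬝ᵥ v) :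
    (((1 : Matrix (Fin n) (Fin n) ℝ) - (s ⬝ᵥ H *ᵥ s)⁻¹ • (vecMulVec s s * H))ᵀ * H *
        ((1 : Matrix (Fin n) (Fin n) ℝ) - (s ⬝ᵥ H *ᵥ s)⁻¹ • (vecMulVec s s * H)) +
      (s ⬝ᵥ v)⁻¹ • vecMulVec v v).PosDef := by
  set P := (1 : Matrix (Fin n) (Fin n) ℝ) - (s ⬝ᵥ H *ᵥ s)⁻¹ • (vecMulVec s s * H)
  have hPHP : (Pᵀ * H * P).PosSemidef := by
    simpa using hH.posSemidef.conjTranspose_mul_mul_same P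
  refine hPHP.add_posDef_of_forall_pos_or_pos
    (posSemidef_smul_vecMulVec_self (inv_nonneg.2 hsv.le) v) fun x hx => ?_
  rw [dotProduct_transpose_mul_mul_mulVec, dotProduct_smul_vecMulVec_self_mulVec]
  by_cases hPx : P *ᵥ x = 0
  · right
    obtain ⟨a, rfl⟩ : ∃ a : ℝ, x = a • s := ⟨_, sub_eq_zero.1 <|
      (one_sub_smul_vecMulVec_mul_mulVec _ H s x).symm.trans hPx⟩
    have ha : a ≠ 0 := by rintro rfl; exact hx (zero_smul ℝ s)
    rw [dotProduct_smul, dotProduct_comm v s, smul_eq_mul]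
    exact mul_pos (inv_pos.2 hsv) (sq_pos_of_ne_zero (mul_ne_zero ha hsv.ne'))
  · exact .inl (hH.dotProduct_mulVec_pos hPx |>.trans_eq (by rw [star_trivial]))

/-- the damped BFGS update preserves symmetric positive definiteness:
if `H` is SPD, `s ≠ 0`, and `sᵀv > 0`, then
`H⁺ = (I − ssᵀH/(sᵀHs))ᵀ H (I − ssᵀH/(sᵀHs)) + vvᵀ/(sᵀv)` is SPD. -/
theorem stmt12 (n : ℕ) [NeZero n]
    (H : Matrix (Fin n) (Fin n) ℝ) (hH : H.PosDef)
    (s v : Fin n → ℝ) (hs : s ≠ 0) (hsv : 0 < s ⬝ᵥ v) :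
    (((1 : Matrix (Fin n) (Fin n) ℝ) - (s ⬝ᵥ H *ᵥ s)⁻¹ • (vecMulVec s s * H))ᵀ * H *
        ((1 : Matrix (Fin n) (Fin n) ℝ) - (s ⬝ᵥ H *ᵥ s)⁻¹ • (vecMulVec s s * H)) +
      (s ⬝ᵥ v)⁻¹ • vecMulVec v v).PosDef :=
  stmt12_general n H hH s v hsv
end

section
/- The random QP generation procedure produces a subproblem whose primal solution is the prescribed direction: let G ∈ ℝ^{n×m} have columns g_1, …, g_m, let δ > 0, let d* ∈ ℝ^n with ‖d*‖_∞ ≤ δ, and let ω* ∈ ℝ^m with ω* ≥ 0 and 𝟙ᵀω* = 1. Define σ* = max(−d* − Gω*, 0) and ρ* = max(d* + Gω*, 0) componentwise, and assume the complementarity conditions: for each i ∈ {1,…,n}, σ*_i > 0 implies d*_i = δ, and ρ*_i > 0 implies d*_i = −δ. Let u ∈ ℝ and v_ω ∈ ℝ^m with v_ω ≥ 0 and ω*_j (v_ω)_j = 0 for all j, and set b = Gᵀ(Gω* + σ* − ρ*) + u𝟙 − v_ω. Then (d*, u) is the unique optimal solution of the primal subproblem with H = W = I: minimize z + (1/2)dᵀd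 over (d, z) ∈ ℝ^n × ℝ subject to ‖d‖_∞ ≤ δ and b_j + g_jᵀd ≤ z for all j ∈ {1,…,m}. -/
/-!
The weights `ω*` act as Lagrange multipliers for the constraints `b_j + g_jᵀ d ≤ z`: averaging
them with `ω*` and using `ω*ᵀ v_ω = 0` gives `z ≥ u + (Gω*)ᵀ (d - d*)`. Since
`σ* - ρ* = -(d* + Gω*)`, complementarity says that `-(d* + Gω*)` lies in the normal cone of the
box at `d*`, i.e. `(d* + Gω*)ᵀ (d - d*) ≥ 0` on the box. Together with
`½‖d‖² = ½‖d*‖² + d*ᵀ (d - d*) + ½‖d - d*‖²` this yields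
`z + ½‖d‖² ≥ u + ½‖d*‖² + ½‖d - d*‖²` for every feasible `(d, z)`, which is optimality of
`(d*, u)` and, through the last term, uniqueness.
-/

open Matrix

theorem mul_sub_nonneg_of_abs_le {x a d δ : ℝ} (hneg : x < 0 → a = δ) (hpos : 0 < x → a = -δ)
    (hd : |d| ≤ δ) : 0 ≤ x * (d - a) := by
  obtain ⟨hd₁, hd₂⟩ := abs_le.1 hd
  rcases lt_trichotomy x 0 with hx | rfl | hx
  · exact mul_nonneg_of_nonpos_of_nonpos hx.le (by linarith [hneg hx])
  · simp
  · exact mul_nonneg hx.le (by linarith [hpos hx])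

variable {ι κ : Type*}

theorem add_max_neg_sub_max_eq_neg (a y : ι → ℝ) :
    y + (fun i => max (-(a i) - y i) 0) - (fun i => max (a i + y i) 0) = -a := by
  funext i
  have h := max_zero_sub_max_neg_zero_eq_self (-(a i + y i))
  rw [neg_neg, neg_add'] at h
  simp only [Pi.add_apply, Pi.sub_apply, Pi.neg_apply]
  linarith

variable [Fintype ι] [Fintype κ]

theorem dotProduct_le_of_forall_le {ω c : κ → ℝ} {z : ℝ} (hω₀ : ∀ j, 0 ≤ ω j)
    (hω₁ : ∑ j, ω j = 1) (hc : ∀ j, c j ≤ z) : ω ⬝ᵥ c ≤ z :=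
  calc ω ⬝ᵥ c ≤ ω ⬝ᵥ fun _ => z := dotProduct_le_dotProduct_of_nonneg_left hc hω₀
    _ = z := by simp [dotProduct, ← Finset.sum_mul, hω₁]

theorem dotProduct_affine_constraints_eq (G : Matrix ι κ ℝ) {ω v : κ → ℝ} (hω₁ : ∑ j, ω j = 1)
    (hωv : ∀ j, ω j * v j = 0) (a d : ι → ℝ) (u : ℝ) :
    ω ⬝ᵥ (Gᵀ *ᵥ (-a) + (fun _ => u) - v + Gᵀ *ᵥ d) = u + (G *ᵥ ω) ⬝ᵥ (d - a) := by
  have hu : ω ⬝ᵥ (fun _ => u) = u := by simp [dotProduct, ← Finset.sum_mul, hω₁]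
  have hv : ω ⬝ᵥ v = 0 := Finset.sum_eq_zero fun j _ => hωv j
  simp only [dotProduct_add, dotProduct_sub, hu, hv, dotProduct_mulVec, vecMul_transpose,
    dotProduct_neg]
  ring

theorem add_half_dotProduct_le {a d y : ι → ℝ} {u z : ℝ} (hz : u + y ⬝ᵥ (d - a) ≤ z)
    (hnormal : 0 ≤ (a + y) ⬝ᵥ (d - a)) :
    u + (1 / 2) * (a ⬝ᵥ a) + (1 / 2) * ((d - a) ⬝ᵥ (d - a)) ≤ z + (1 / 2) * (d ⬝ᵥ d) := by
  have hsq : d ⬝ᵥ d = a ⬝ᵥ a + 2 * (a ⬝ᵥ (d - a)) + (d - a) ⬝ᵥ (d - a) := by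
    simp only [dotProduct_sub, sub_dotProduct, dotProduct_comm d a]
    ring
  rw [add_dotProduct] at hnormal
  linarith

theorem stmt17_general (n m : ℕ)
    (G : Matrix (Fin n) (Fin m) ℝ) (δ : ℝ)
    (dstar : Fin n → ℝ) (hdstar : ∀ i, |dstar i| ≤ δ)
    (ωstar : Fin m → ℝ) (hω0 : ∀ j, 0 ≤ ωstar j) (hω1 : ∑ j, ωstar j = 1)
    (σstar ρstar : Fin n → ℝ)
    (hσ : σstar = fun i => max (-(dstar i) - (G *ᵥ ωstar) i) 0)
    (hρ : ρstar = fun i => max (dstar i + (G *ᵥ ωstar) i) 0)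
    (hcσ : ∀ i, 0 < σstar i → dstar i = δ)
    (hcρ : ∀ i, 0 < ρstar i → dstar i = -δ)
    (u : ℝ) (vω : Fin m → ℝ) (hv0 : ∀ j, 0 ≤ vω j) (hcv : ∀ j, ωstar j * vω j = 0)
    (b : Fin m → ℝ)
    (hb : b = Gᵀ *ᵥ (G *ᵥ ωstar + σstar - ρstar) + (fun _ => u) - vω) :
    ((∀ i, |dstar i| ≤ δ) ∧ ∀ j, b j + (fun i => G i j) ⬝ᵥ dstar ≤ u) ∧
    (∀ (d : Fin n → ℝ) (z : ℝ), (∀ i, |d i| ≤ δ) →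
      (∀ j, b j + (fun i => G i j) ⬝ᵥ d ≤ z) →
      u + (1 / 2) * (dstar ⬝ᵥ dstar) ≤ z + (1 / 2) * (d ⬝ᵥ d)) ∧
    (∀ (d : Fin n → ℝ) (z : ℝ), (∀ i, |d i| ≤ δ) →
      (∀ j, b j + (fun i => G i j) ⬝ᵥ d ≤ z) →
      (∀ (d' : Fin n → ℝ) (z' : ℝ), (∀ i, |d' i| ≤ δ) →
        (∀ j, b j + (fun i => G i j) ⬝ᵥ d' ≤ z') →
        z + (1 / 2) * (d ⬝ᵥ d) ≤ z' + (1 / 2) * (d' ⬝ᵥ d')) →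
      d = dstar ∧ z = u) := by
  have hb' : b = Gᵀ *ᵥ (-dstar) + (fun _ => u) - vω := by
    rw [hb, hσ, hρ, add_max_neg_sub_max_eq_neg]
  have hlower (d : Fin n → ℝ) (z : ℝ) (hz : ∀ j, b j + (fun i => G i j) ⬝ᵥ d ≤ z) :
      u + (G *ᵥ ωstar) ⬝ᵥ (d - dstar) ≤ z := by
    rw [← dotProduct_affine_constraints_eq G hω1 hcv dstar d u, ← hb']
    exact dotProduct_le_of_forall_le hω0 hω1 hz
  have hfeas (j : Fin m) : b j + (fun i => G i j) ⬝ᵥ dstar ≤ u := by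
    change b j + (Gᵀ *ᵥ dstar) j ≤ u
    simp only [hb', mulVec_neg, Pi.sub_apply, Pi.add_apply, Pi.neg_apply]
    linarith [hv0 j]
  have hnormal (d : Fin n → ℝ) (hd : ∀ i, |d i| ≤ δ) :
      0 ≤ (dstar + G *ᵥ ωstar) ⬝ᵥ (d - dstar) :=
    Finset.sum_nonneg fun i _ => mul_sub_nonneg_of_abs_le
      (fun h => hcσ i (hσ ▸ lt_max_of_lt_left (by rw [Pi.add_apply] at h; linarith)))
      (fun h => hcρ i (hρ ▸ lt_max_of_lt_left h)) (hd i)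
  have hkey (d : Fin n → ℝ) (z : ℝ) (hd : ∀ i, |d i| ≤ δ)
      (hz : ∀ j, b j + (fun i => G i j) ⬝ᵥ d ≤ z) :
      u + (1 / 2) * (dstar ⬝ᵥ dstar) + (1 / 2) * ((d - dstar) ⬝ᵥ (d - dstar))
        ≤ z + (1 / 2) * (d ⬝ᵥ d) :=
    add_half_dotProduct_le (hlower d z hz) (hnormal d hd)
  have hsq (w : Fin n → ℝ) : 0 ≤ w ⬝ᵥ w := Finset.sum_nonneg fun i _ => mul_self_nonneg (w i)
  refine ⟨⟨hdstar, hfeas⟩, fun d z hd hz => ?_, fun d z hd hz hopt => ?_⟩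
  · linarith [hkey d z hd hz, hsq (d - dstar)]
  · have hdd : d = dstar := by
      rw [← sub_eq_zero, ← dotProduct_self_eq_zero]
      linarith [hopt dstar u hdstar hfeas, hkey d z hd hz, hsq (d - dstar)]
    subst hdd
    refine ⟨rfl, le_antisymm ?_ (by simpa using hlower d z hz)⟩
    linarith [hopt d u hd hfeas]

/-- the random QP generation procedure produces a subproblem whose primal
solution is the prescribed direction: with `σ* = max(−d* − Gω*, 0)`,
`ρ* = max(d* + Gω*, 0)`, complementarity as assumed, and
`b = Gᵀ(Gω* + σ* − ρ*) + u𝟙 − v_ω`, the pair `(d*, u)` is the unique optimal solution of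
the primal subproblem with `H = W = I`. -/
theorem stmt17 (n m : ℕ) [NeZero n] [NeZero m]
    (G : Matrix (Fin n) (Fin m) ℝ) (δ : ℝ) (hδ : 0 < δ)
    (dstar : Fin n → ℝ) (hdstar : ∀ i, |dstar i| ≤ δ)
    (ωstar : Fin m → ℝ) (hω0 : ∀ j, 0 ≤ ωstar j) (hω1 : ∑ j, ωstar j = 1)
    (σstar ρstar : Fin n → ℝ)
    (hσ : σstar = fun i => max (-(dstar i) - (G *ᵥ ωstar) i) 0)
    (hρ : ρstar = fun i => max (dstar i + (G *ᵥ ωstar) i) 0)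
    (hcσ : ∀ i, 0 < σstar i → dstar i = δ)
    (hcρ : ∀ i, 0 < ρstar i → dstar i = -δ)
    (u : ℝ) (vω : Fin m → ℝ) (hv0 : ∀ j, 0 ≤ vω j) (hcv : ∀ j, ωstar j * vω j = 0)
    (b : Fin m → ℝ)
    (hb : b = Gᵀ *ᵥ (G *ᵥ ωstar + σstar - ρstar) + (fun _ => u) - vω) :
    ((∀ i, |dstar i| ≤ δ) ∧ ∀ j, b j + (fun i => G i j) ⬝ᵥ dstar ≤ u) ∧
    (∀ (d : Fin n → ℝ) (z : ℝ), (∀ i, |d i| ≤ δ) →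
      (∀ j, b j + (fun i => G i j) ⬝ᵥ d ≤ z) →
      u + (1 / 2) * (dstar ⬝ᵥ dstar) ≤ z + (1 / 2) * (d ⬝ᵥ d)) ∧
    (∀ (d : Fin n → ℝ) (z : ℝ), (∀ i, |d i| ≤ δ) →
      (∀ j, b j + (fun i => G i j) ⬝ᵥ d ≤ z) →
      (∀ (d' : Fin n → ℝ) (z' : ℝ), (∀ i, |d' i| ≤ δ) →
        (∀ j, b j + (fun i => G i j) ⬝ᵥ d' ≤ z') →
        z + (1 / 2) * (d ⬝ᵥ d) ≤ z' + (1 / 2) * (d' ⬝ᵥ d')) →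
      d = dstar ∧ z = u) :=
  stmt17_general n m G δ dstar hdstar ωstar hω0 hω1 σstar ρstar hσ hρ hcσ hcρ u vω hv0 hcv b hb
end
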